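/- arXiv:2411.11434 — 2 statements merged into one kernel-verified Lean document; each statement's English description precedes it below -/
import Mathlib

section
/- Define ρ_s(x) = exp(−π‖x/s‖²) for x ∈ ℝⁿ and s > 0 (with ρ = ρ₁). For a unit vector w ∈ ℝⁿ, write ỹ = ⟨y, w⟩ and y⊥ = y − ỹ·w. Then with γ' = √(β²+γ²), for every y ∈ ℝⁿ: ρ(y⊥) · Σ_{k∈ℤ} ρ_{γ'}(k) · ρ_{β/γ'}(ỹ − kγ/γ'²) = ρ(y) · Σ_{k∈ℤ} ρ_β(k − γ⟨w, y⟩). -/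
open scoped InnerProductSpace

/-!
Term by term, completing the square in `k` turns `ρ_{γ'}(k) · ρ_{β/γ'}(ỹ − kγ/γ'²)` into
`ρ(ỹ) · ρ_β(k − γỹ)`, so `ρ(ỹ)` factors out of the sum; Pythagoras gives `ρ(y⊥) · ρ(ỹ) = ρ(y)`.
-/

theorem norm_sub_inner_smul_sq_of_norm_eq_one {E : Type*} [NormedAddCommGroup E]
    [InnerProductSpace ℝ E] {w : E} (hw : ‖w‖ = 1) (y : E) :
    ‖y - ⟪y, w⟫_ℝ • w‖ ^ 2 = ‖y‖ ^ 2 - ⟪y, w⟫_ℝ ^ 2 := by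
  rw [norm_sub_sq_real, real_inner_smul_right, norm_smul, hw, mul_one, Real.norm_eq_abs, sq_abs]
  ring

theorem sq_div_add_sq_div_eq_of_sq_eq_add_sq {β γ γ' : ℝ} (hβ : β ≠ 0)
    (hγ' : γ' ^ 2 = β ^ 2 + γ ^ 2) (k t : ℝ) :
    (k / γ') ^ 2 + ((t - k * γ / γ' ^ 2) / (β / γ')) ^ 2 = t ^ 2 + ((k - γ * t) / β) ^ 2 := by
  have hsum : β ^ 2 + γ ^ 2 ≠ 0 := by positivity
  have hγ'ne : γ' ≠ 0 := by rintro rfl; simp_all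
  simp only [div_pow, hγ']
  field_simp
  ring

theorem stmt_2_general (n : ℕ) (β γ γ' : ℝ) (hβ : 0 < β)
    (hγ' : γ' = Real.sqrt (β ^ 2 + γ ^ 2))
    (w : EuclideanSpace ℝ (Fin n)) (hw : ‖w‖ = 1)
    (y : EuclideanSpace ℝ (Fin n)) :
    Real.exp (-Real.pi * ‖y - ⟪y, w⟫_ℝ • w‖ ^ 2) *
        ∑' k : ℤ,
          Real.exp (-Real.pi * ((k : ℝ) / γ') ^ 2) *
            Real.exp (-Real.pi * ((⟪y, w⟫_ℝ - (k : ℝ) * γ / γ' ^ 2) / (β / γ')) ^ 2)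
      = Real.exp (-Real.pi * ‖y‖ ^ 2) *
          ∑' k : ℤ, Real.exp (-Real.pi * (((k : ℝ) - γ * ⟪w, y⟫_ℝ) / β) ^ 2) := by
  have hγ'sq : γ' ^ 2 = β ^ 2 + γ ^ 2 := by rw [hγ', Real.sq_sqrt (by positivity)]
  have hterm : ∀ k : ℤ,
      Real.exp (-Real.pi * ((k : ℝ) / γ') ^ 2) *
          Real.exp (-Real.pi * ((⟪y, w⟫_ℝ - (k : ℝ) * γ / γ' ^ 2) / (β / γ')) ^ 2)
        = Real.exp (-Real.pi * ⟪y, w⟫_ℝ ^ 2) *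
          Real.exp (-Real.pi * (((k : ℝ) - γ * ⟪w, y⟫_ℝ) / β) ^ 2) := by
    intro k
    rw [← Real.exp_add, ← Real.exp_add, ← mul_add, ← mul_add, real_inner_comm w y,
      sq_div_add_sq_div_eq_of_sq_eq_add_sq hβ.ne' hγ'sq]
  rw [tsum_congr hterm, tsum_mul_left, ← mul_assoc, ← Real.exp_add,
    norm_sub_inner_smul_sq_of_norm_eq_one hw]
  congr 2
  ring

/-- with ρ_s(x) = exp(−π‖x/s‖²), w a unit vector, ỹ = ⟨y,w⟩,
y⊥ = y − ỹ·w, γ' = √(β²+γ²):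
ρ(y⊥) · Σ_{k∈ℤ} ρ_{γ'}(k) · ρ_{β/γ'}(ỹ − kγ/γ'²) = ρ(y) · Σ_{k∈ℤ} ρ_β(k − γ⟨w,y⟩). -/
theorem stmt_2 (n : ℕ) (β γ γ' : ℝ) (hβ : 0 < β) (hγ : 0 < γ)
    (hγ' : γ' = Real.sqrt (β ^ 2 + γ ^ 2))
    (w : EuclideanSpace ℝ (Fin n)) (hw : ‖w‖ = 1)
    (y : EuclideanSpace ℝ (Fin n)) :
    Real.exp (-Real.pi * ‖y - ⟪y, w⟫_ℝ • w‖ ^ 2) *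
        ∑' k : ℤ,
          Real.exp (-Real.pi * ((k : ℝ) / γ') ^ 2) *
            Real.exp (-Real.pi * ((⟪y, w⟫_ℝ - (k : ℝ) * γ / γ' ^ 2) / (β / γ')) ^ 2)
      = Real.exp (-Real.pi * ‖y‖ ^ 2) *
          ∑' k : ℤ, Real.exp (-Real.pi * (((k : ℝ) - γ * ⟪w, y⟫_ℝ) / β) ^ 2) :=
  stmt_2_general n β γ γ' hβ hγ' w hw y
end

section
/- The one-dimensional marginal of H_{w,β,γ} in the direction w has density proportional to Σ_{k∈ℤ} exp(−π k²/(β²+γ²)) · exp(−π (β²+γ²)/β² · (t − kγ/(β²+γ²))²), i.e., it is a mixture of Gaussians with means kγ/(β²+γ²) and standard deviation parameter β/√(β²+γ²) weighted by exp(−πk²/(β²+γ²)). -/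
/-!
Write `y = t • w + z` with `z ⟂ w`. The Gaussian factors as `ρ(y) = ρ(t) ρ(z)` while the periodic
factor `∑ₖ ρ_β(k - γ t)` only sees `t`, so integrating out `z` (a Gaussian of total mass one) shows
that the marginal has density `c ρ(t) ∑ₖ ρ_β(k - γ t)`. Completing the square,
`ρ(t) ρ_β(k - γ t) = ρ_{√(β²+γ²)}(k) ρ_{β/√(β²+γ²)}(t - k γ/(β²+γ²))`, term by term.
-/

open MeasureTheory Real
open scoped InnerProductSpace ENNReal

theorem MeasureTheory.MeasurePreserving.map_withDensity_comp {α β : Type*}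
    [MeasurableSpace α] [MeasurableSpace β] {μ : Measure α} {ν : Measure β} {T : α → β}
    (hT : MeasurePreserving T μ ν) {F : β → ℝ≥0∞} (hF : Measurable F) :
    (μ.withDensity (F ∘ T)).map T = ν.withDensity F := by
  ext s hs
  rw [Measure.map_apply hT.measurable hs, withDensity_apply _ (hs.preimage hT.measurable),
    withDensity_apply _ hs]
  exact hT.setLIntegral_comp_preimage hs hF

theorem MeasureTheory.Measure.map_fst_withDensity_mul_of_lintegral_eq_one
    {α β : Type*} [MeasurableSpace α] [MeasurableSpace β] {μ : Measure α} {ν : Measure β}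
    [SigmaFinite μ] [SigmaFinite ν] {f : α → ℝ≥0∞} {g : β → ℝ≥0∞}
    (hf : Measurable f) (hg : Measurable g) (hg_one : ∫⁻ z, g z ∂ν = 1) :
    ((μ.prod ν).withDensity fun p => f p.1 * g p.2).map Prod.fst = μ.withDensity f := by
  have : IsFiniteMeasure (ν.withDensity g) := isFiniteMeasure_withDensity (by simp [hg_one])
  rw [← prod_withDensity hf hg, map_fst_prod, withDensity_apply _ MeasurableSet.univ,
    Measure.restrict_univ, hg_one, one_smul]

section InnerProductSpace

variable {E : Type*} [NormedAddCommGroup E] [InnerProductSpace ℝ E] [FiniteDimensional ℝ E]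

theorem exists_orthonormalBasis_fin_succ_apply_zero {w : E} (hw : ‖w‖ = 1) :
    ∃ (m : ℕ) (b : OrthonormalBasis (Fin (m + 1)) ℝ E), b 0 = w := by
  obtain ⟨m, hm⟩ : ∃ m, Module.finrank ℝ E = m + 1 :=
    Nat.exists_eq_succ_of_ne_zero (Module.finrank_pos_iff_exists_ne_zero.2
      ⟨w, norm_ne_zero_iff.1 (by simp [hw])⟩).ne'
  have horth : Orthonormal ℝ (({0} : Set (Fin (m + 1))).domRestrict fun _ => w) :=
    ⟨fun _ => hw, fun i j hij => absurd (Subsingleton.elim i j) hij⟩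
  obtain ⟨b, hb⟩ := horth.exists_orthonormalBasis_extension_of_card_eq (by simpa using hm)
  exact ⟨m, b, hb 0 rfl⟩

variable [MeasurableSpace E] [BorelSpace E]

theorem lintegral_exp_neg_pi_mul_norm_sq :
    ∫⁻ v : E, ENNReal.ofReal (exp (-π * ‖v‖ ^ 2)) = 1 := by
  have h := GaussianFourier.integral_rexp_neg_mul_sq_norm (V := E) pi_pos
  rw [div_self pi_ne_zero, one_rpow] at h
  rw [← ofReal_integral_eq_lintegral_ofReal (.of_integral_ne_zero (by rw [h]; exact one_ne_zero))
    (.of_forall fun _ => (exp_pos _).le), h, ENNReal.ofReal_one]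

theorem exists_measurePreserving_inner_prod {w : E} (hw : ‖w‖ = 1) :
    ∃ (m : ℕ) (T : E → ℝ × EuclideanSpace ℝ (Fin m)), MeasurePreserving T ∧
      ∀ y, (T y).1 = ⟪y, w⟫_ℝ ∧ ‖y‖ ^ 2 = (T y).1 ^ 2 + ‖(T y).2‖ ^ 2 := by
  obtain ⟨m, b, hb⟩ := exists_orthonormalBasis_fin_succ_apply_zero hw
  refine ⟨m, Prod.map id (WithLp.toLp 2) ∘ MeasurableEquiv.piFinSuccAbove (fun _ => ℝ) 0 ∘
    WithLp.ofLp ∘ b.repr, ?_, fun y => ⟨?_, ?_⟩⟩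
  · exact ((MeasurePreserving.id _).prod (PiLp.volume_preserving_toLp _)).comp <|
      (measurePreserving_piFinSuccAbove (fun _ => volume) 0).comp <|
        (PiLp.volume_preserving_ofLp _).comp b.measurePreserving_repr
  · simp [b.repr_apply_apply, hb, real_inner_comm]
  · rw [← b.repr.norm_map, EuclideanSpace.norm_sq_eq, EuclideanSpace.norm_sq_eq,
      Fin.sum_univ_succ]
    simp [MeasurableEquiv.piFinSuccAbove, Fin.tail]

theorem map_inner_withDensity_exp_neg_pi_norm_sq_mul {w : E} (hw : ‖w‖ = 1)
    {g : ℝ → ℝ≥0∞} (hg : Measurable g) :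
    (volume.withDensity fun y : E => ENNReal.ofReal (exp (-π * ‖y‖ ^ 2)) * g ⟪y, w⟫_ℝ).map
        (⟪·, w⟫_ℝ) =
      volume.withDensity fun t => ENNReal.ofReal (exp (-π * t ^ 2)) * g t := by
  obtain ⟨m, T, hT, hTy⟩ := exists_measurePreserving_inner_prod hw
  set f : ℝ → ℝ≥0∞ := fun t => ENNReal.ofReal (exp (-π * t ^ 2)) * g t
  set h : EuclideanSpace ℝ (Fin m) → ℝ≥0∞ := fun v => ENNReal.ofReal (exp (-π * ‖v‖ ^ 2))
  have hf : Measurable f := by fun_prop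
  have hh : Measurable h := by fun_prop
  have hdens : (fun y : E => ENNReal.ofReal (exp (-π * ‖y‖ ^ 2)) * g ⟪y, w⟫_ℝ) =
      (fun p => f p.1 * h p.2) ∘ T := by
    funext y
    simp only [Function.comp_apply, f, h, (hTy y).2, ← (hTy y).1, mul_add, exp_add,
      ENNReal.ofReal_mul (exp_pos _).le]
    ring
  have hinner : (⟪·, w⟫_ℝ) = Prod.fst ∘ T := funext fun y => ((hTy y).1).symm
  rw [hdens, hinner, ← Measure.map_map measurable_fst hT.measurable,
    hT.map_withDensity_comp (by fun_prop), Measure.volume_eq_prod,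
    Measure.map_fst_withDensity_mul_of_lintegral_eq_one hf hh lintegral_exp_neg_pi_mul_norm_sq]

end InnerProductSpace

theorem exp_neg_pi_sq_mul_exp_neg_pi_div_sq {β : ℝ} (hβ : β ≠ 0) (γ x t : ℝ) :
    exp (-π * t ^ 2) * exp (-π * ((x - γ * t) / β) ^ 2) =
      exp (-π * x ^ 2 / (β ^ 2 + γ ^ 2)) *
        exp (-π * ((β ^ 2 + γ ^ 2) / β ^ 2) * (t - x * γ / (β ^ 2 + γ ^ 2)) ^ 2) := by
  have hβγ : β ^ 2 + γ ^ 2 ≠ 0 := by positivity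
  rw [← exp_add, ← exp_add]
  congr 1
  field_simp
  ring

theorem stmt_5_general (n : ℕ) (β γ : ℝ) (hβ : 0 < β)
    (w : EuclideanSpace ℝ (Fin n)) (hw : ‖w‖ = 1)
    (μ : Measure (EuclideanSpace ℝ (Fin n))) (c : ℝ) (hc : 0 < c)
    (hμ : μ = volume.withDensity fun y => ENNReal.ofReal
      (c * (Real.exp (-Real.pi * ‖y‖ ^ 2) *
        ∑' k : ℤ, Real.exp (-Real.pi * (((k : ℝ) - γ * ⟪w, y⟫_ℝ) / β) ^ 2)))) :
    ∃ c' : ℝ, 0 < c' ∧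
      Measure.map (fun y => ⟪y, w⟫_ℝ) μ
        = (volume : Measure ℝ).withDensity fun t => ENNReal.ofReal
            (c' * ∑' k : ℤ,
              Real.exp (-Real.pi * (k : ℝ) ^ 2 / (β ^ 2 + γ ^ 2)) *
                Real.exp (-Real.pi * ((β ^ 2 + γ ^ 2) / β ^ 2) *
                  (t - (k : ℝ) * γ / (β ^ 2 + γ ^ 2)) ^ 2)) := by
  set θ : ℝ → ℝ := fun t => ∑' k : ℤ, exp (-π * (((k : ℝ) - γ * t) / β) ^ 2)
  have hmeas : Measurable fun t => ENNReal.ofReal (c * θ t) :=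
    ((Measurable.tsum fun k => by fun_prop).const_mul c).ennreal_ofReal
  have hmixture (t : ℝ) : ∑' k : ℤ, exp (-π * (k : ℝ) ^ 2 / (β ^ 2 + γ ^ 2)) *
      exp (-π * ((β ^ 2 + γ ^ 2) / β ^ 2) * (t - (k : ℝ) * γ / (β ^ 2 + γ ^ 2)) ^ 2) =
      exp (-π * t ^ 2) * θ t := by
    simp only [θ, ← tsum_mul_left, exp_neg_pi_sq_mul_exp_neg_pi_div_sq hβ.ne']
  have hsplit (t s : ℝ) : ENNReal.ofReal (c * (exp (-π * s ^ 2) * θ t)) =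
      ENNReal.ofReal (exp (-π * s ^ 2)) * ENNReal.ofReal (c * θ t) := by
    rw [← ENNReal.ofReal_mul (exp_pos _).le, mul_left_comm]
  have hdensity (y : EuclideanSpace ℝ (Fin n)) :
      ENNReal.ofReal (c * (exp (-π * ‖y‖ ^ 2) *
        ∑' k : ℤ, exp (-π * (((k : ℝ) - γ * ⟪w, y⟫_ℝ) / β) ^ 2))) =
      ENNReal.ofReal (exp (-π * ‖y‖ ^ 2)) * ENNReal.ofReal (c * θ ⟪y, w⟫_ℝ) := by
    rw [real_inner_comm]
    exact hsplit _ _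
  refine ⟨c, hc, ?_⟩
  simpa only [hμ, hdensity, hmixture, hsplit] using
    map_inner_withDensity_exp_neg_pi_norm_sq_mul hw hmeas

/-- the one-dimensional marginal of H_{w,β,γ} in direction w
(the pushforward under y ↦ ⟨y,w⟩) has density proportional to
Σ_{k∈ℤ} exp(−πk²/(β²+γ²)) · exp(−π·(β²+γ²)/β² · (t − kγ/(β²+γ²))²). -/
theorem stmt_5 (n : ℕ) (β γ : ℝ) (hβ : 0 < β) (hγ : 0 < γ)
    (w : EuclideanSpace ℝ (Fin n)) (hw : ‖w‖ = 1)
    (μ : Measure (EuclideanSpace ℝ (Fin n))) (c : ℝ) (hc : 0 < c)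
    (hμ : μ = volume.withDensity fun y => ENNReal.ofReal
      (c * (Real.exp (-Real.pi * ‖y‖ ^ 2) *
        ∑' k : ℤ, Real.exp (-Real.pi * (((k : ℝ) - γ * ⟪w, y⟫_ℝ) / β) ^ 2))))
    (hprob : IsProbabilityMeasure μ) :
    ∃ c' : ℝ, 0 < c' ∧
      Measure.map (fun y => ⟪y, w⟫_ℝ) μ
        = (volume : Measure ℝ).withDensity fun t => ENNReal.ofReal
            (c' * ∑' k : ℤ,
              Real.exp (-Real.pi * (k : ℝ) ^ 2 / (β ^ 2 + γ ^ 2)) *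
                Real.exp (-Real.pi * ((β ^ 2 + γ ^ 2) / β ^ 2) *
                  (t - (k : ℝ) * γ / (β ^ 2 + γ ^ 2)) ^ 2)) :=
  stmt_5_general n β γ hβ w hw μ c hc hμ
end
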